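/- Let g : (0,1) → ℝ be the function that maps a real number x = 0.b₁b₂b₃… (in its binary expansion not ending in all 1's) to g(x) = 0.b₁0b₂0b₃0… (interleaving the binary digits of x with zeros). Then g is discontinuous at every dyadic rational m/2ⁿ with 0 < m < 2ⁿ; in particular, the set of discontinuities of g is dense in (0,1). -/

import Mathlib

/-- The `i`-th digit (`i ≥ 1`) of the canonical binary expansion of `x ∈ [0,1)`
(the expansion not ending in an infinite tail of 1's). -/
noncomputable def binDigit (x : ℝ) (i : ℕ) : ℕ := ⌊x * 2 ^ i⌋.toNat % 2

/-- The interleaving function `g(0.b₁b₂b₃…) = 0.b₁0b₂0b₃0…`. -/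
noncomputable def interleaveZeros (x : ℝ) : ℝ :=
  ∑' i : ℕ, (binDigit x (i + 1) : ℝ) / 2 ^ (2 * i + 1)

open Filter Topology Set

/-!
The digits of `x = m / 2 ^ n` (`m` odd) and of `x - 2 ^ (-k)` (`k ≥ n`) agree before position `n`,
and at position `n` the subtraction borrows, turning the digit `1` of `x` into `0`. Since `g` weighs
the `i`-th digit by `2 · 4 ^ (-i)`, this first differing digit outweighs all later ones together:
`g x - g (x - 2 ^ (-k)) ≥ (4 / 3) · 4 ^ (-n)` for every `k`, although `x - 2 ^ (-k) → x`.
Every dyadic rational in `(0, 1)` has this form, and dyadic rationals are dense.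
-/

theorem Nat.mul_sub_one_div (m : ℕ) {b : ℕ} (hb : 0 < b) : (m * b - 1) / b = m - 1 := by
  rcases Nat.eq_zero_or_pos m with rfl | hm
  · simp
  apply Nat.div_eq_of_lt_le
  · rw [Nat.sub_one_mul]; exact Nat.sub_le_sub_left hb _
  · rw [Nat.sub_add_cancel hm]
    exact Nat.sub_lt (Nat.mul_pos hm hb) one_pos

theorem Nat.sub_one_div_of_not_dvd {m b : ℕ} (h : ¬ b ∣ m) : (m - 1) / b = m / b := by
  rcases Nat.eq_zero_or_pos b with rfl | hb
  · simp
  have hdiv := Nat.div_add_mod m b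
  have hlt := Nat.mod_lt m hb
  have hmod : m % b ≠ 0 := fun h0 => h (Nat.dvd_of_mod_eq_zero h0)
  apply Nat.div_eq_of_lt_le
  · rw [mul_comm]; omega
  · rw [Nat.succ_mul, mul_comm]; omega

theorem tsum_mul_pow_sub_tsum_mul_pow_ge {a b : ℕ → ℝ} {r : ℝ} {N : ℕ} (hr₀ : 0 ≤ r)
    (hr₁ : r < 1) (ha : ∀ i, a i ∈ Icc 0 1) (hb : ∀ i, b i ∈ Icc 0 1)
    (hab : ∀ i < N, a i = b i) (haN : a N = 1) (hbN : b N = 0) :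
    r ^ N - r ^ (N + 1) / (1 - r) ≤ ∑' i, a i * r ^ i - ∑' i, b i * r ^ i := by
  have hgeom : Summable (r ^ ·) := summable_geometric_of_lt_one hr₀ hr₁
  have hsum : ∀ c : ℕ → ℝ, (∀ i, c i ∈ Icc 0 1) → Summable fun i => c i * r ^ i :=
    fun c hc => hgeom.of_nonneg_of_le (fun i => mul_nonneg (hc i).1 (pow_nonneg hr₀ i))
      fun i => mul_le_of_le_one_left (pow_nonneg hr₀ i) (hc i).2
  rw [← (hsum a ha).sum_add_tsum_nat_add (N + 1), ← (hsum b hb).sum_add_tsum_nat_add (N + 1)]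
  have hhead : ∑ i ∈ Finset.range (N + 1), a i * r ^ i
      = ∑ i ∈ Finset.range (N + 1), b i * r ^ i + r ^ N := by
    rw [Finset.sum_range_succ, Finset.sum_range_succ, haN, hbN,
      Finset.sum_congr rfl fun i hi => by rw [hab i (Finset.mem_range.1 hi)]]
    ring
  have htail_a : 0 ≤ ∑' i, a (i + (N + 1)) * r ^ (i + (N + 1)) :=
    tsum_nonneg fun i => mul_nonneg (ha _).1 (pow_nonneg hr₀ _)
  have htail_b : ∑' i, b (i + (N + 1)) * r ^ (i + (N + 1)) ≤ r ^ (N + 1) / (1 - r) :=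
    calc ∑' i, b (i + (N + 1)) * r ^ (i + (N + 1))
        ≤ ∑' i, r ^ i * r ^ (N + 1) :=
          ((hsum b hb).comp_injective (add_left_injective (N + 1))).tsum_le_tsum
            (fun i => by
              rw [← pow_add]
              exact mul_le_of_le_one_left (pow_nonneg hr₀ _) (hb _).2)
            (hgeom.mul_right _)
      _ = r ^ (N + 1) / (1 - r) := by
          rw [tsum_mul_right, tsum_geometric_of_lt_one hr₀ hr₁, div_eq_inv_mul]
  linarith

theorem binDigit_mem_Icc (x : ℝ) (i : ℕ) : (binDigit x i : ℝ) ∈ Icc 0 1 :=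
  ⟨Nat.cast_nonneg _, Nat.cast_le_one.2 (Nat.le_of_lt_succ (Nat.mod_lt _ two_pos))⟩

theorem interleaveZeros_eq_tsum (x : ℝ) :
    interleaveZeros x = (∑' i, (binDigit x (i + 1) : ℝ) * (1 / 4) ^ i) / 2 := by
  rw [interleaveZeros, ← tsum_div_const]
  congr 1 with i
  rw [pow_succ, pow_mul, one_div_pow]
  norm_num
  ring

theorem interleaveZeros_sub_ge {x y : ℝ} {N : ℕ}
    (hxy : ∀ i < N, binDigit x (i + 1) = binDigit y (i + 1))
    (hx : binDigit x (N + 1) = 1) (hy : binDigit y (N + 1) = 0) :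
    (1 / 4) ^ N / 3 ≤ interleaveZeros x - interleaveZeros y := by
  have h := tsum_mul_pow_sub_tsum_mul_pow_ge (r := 1 / 4) (by norm_num) (by norm_num)
    (fun i => binDigit_mem_Icc x (i + 1)) (fun i => binDigit_mem_Icc y (i + 1))
    (fun i hi => congrArg Nat.cast (hxy i hi)) (by rw [hx, Nat.cast_one])
    (by rw [hy, Nat.cast_zero])
  have hr : (1 / 4 : ℝ) ^ (N + 1) / (1 - 1 / 4) = (1 / 4) ^ N / 3 := by rw [pow_succ]; ring
  rw [hr] at h
  rw [interleaveZeros_eq_tsum, interleaveZeros_eq_tsum]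
  linarith

theorem binDigit_natCast_div_two_pow (a b i : ℕ) (hi : i ≤ b) :
    binDigit ((a : ℝ) / 2 ^ b) i = a / 2 ^ (b - i) % 2 := by
  have h : (a : ℝ) / 2 ^ b * 2 ^ i = (a : ℝ) / ((2 ^ (b - i) : ℕ) : ℝ) := by
    rw [Nat.cast_pow, Nat.cast_two, div_mul_eq_mul_div,
      div_eq_div_iff (by positivity) (by positivity),
      mul_assoc, ← pow_add, Nat.add_sub_cancel' hi]
  rw [binDigit, h, Int.floor_toNat, Nat.floor_div_natCast, Nat.floor_natCast]

theorem binDigit_div_two_pow_sub {m n k i : ℕ} (hm : m ≠ 0) (hi : i ≤ n) (hk : n ≤ k) :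
    binDigit ((m : ℝ) / 2 ^ n - 1 / 2 ^ k) i = (m - 1) / 2 ^ (n - i) % 2 := by
  have hk' : (2 : ℝ) ^ k = 2 ^ n * 2 ^ (k - n) := by rw [← pow_add, Nat.add_sub_cancel' hk]
  have h : (m : ℝ) / 2 ^ n - 1 / 2 ^ k = ((m * 2 ^ (k - n) - 1 : ℕ) : ℝ) / 2 ^ k := by
    rw [Nat.cast_sub (Nat.one_le_iff_ne_zero.2 (by positivity)), hk']
    push_cast
    field_simp
  rw [h, binDigit_natCast_div_two_pow _ _ _ (hi.trans hk),
    show k - i = (k - n) + (n - i) by omega, pow_add, ← Nat.div_div_eq_div_mul,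
    Nat.mul_sub_one_div _ (Nat.two_pow_pos _)]

theorem not_continuousAt_of_tendsto_of_le_sub {X : Type*} [TopologicalSpace X] {f : X → ℝ}
    {x : X} {l : Filter ℕ} [l.NeBot] {u : ℕ → X} {c : ℝ} (hc : 0 < c)
    (hu : Tendsto u l (𝓝 x))
    (hgap : ∀ᶠ k in l, c ≤ f x - f (u k)) : ¬ ContinuousAt f x := by
  intro hf
  have hnear : ∀ᶠ k in l, f x - c < f (u k) :=
    (hf.tendsto.comp hu).eventually (lt_mem_nhds (sub_lt_self (f x) hc))
  obtain ⟨k, hk, hk'⟩ := (hnear.and hgap).exists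
  linarith

theorem tendsto_sub_one_div_two_pow (x : ℝ) :
    Tendsto (fun k : ℕ => x - 1 / 2 ^ k) atTop (𝓝 x) := by
  simpa using tendsto_const_nhds.sub
    (tendsto_inv_atTop_zero.comp (tendsto_pow_atTop_atTop_of_one_lt (one_lt_two (α := ℝ))))

theorem not_continuousAt_interleaveZeros_of_odd {m n : ℕ} (hm : Odd m) (hn : n ≠ 0) :
    ¬ ContinuousAt interleaveZeros ((m : ℝ) / 2 ^ n) := by
  obtain ⟨N, rfl⟩ := Nat.exists_eq_succ_of_ne_zero hn
  have hm₀ : m ≠ 0 := by rintro rfl; exact Nat.not_odd_zero hm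
  refine not_continuousAt_of_tendsto_of_le_sub (by positivity : (0 : ℝ) < (1 / 4) ^ N / 3)
    (tendsto_sub_one_div_two_pow _) ?_
  filter_upwards [eventually_ge_atTop (N + 1)] with k hk
  apply interleaveZeros_sub_ge
  · intro i hi
    rw [binDigit_natCast_div_two_pow _ _ _ (by omega), binDigit_div_two_pow_sub hm₀ (by omega) hk,
      Nat.sub_one_div_of_not_dvd fun hd =>
        hm.not_two_dvd_nat ((dvd_pow_self 2 (by omega)).trans hd)]
  · rw [binDigit_natCast_div_two_pow _ _ _ le_rfl, Nat.sub_self, pow_zero, Nat.div_one]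
    exact Nat.odd_iff.1 hm
  · rw [binDigit_div_two_pow_sub hm₀ le_rfl hk, Nat.sub_self, pow_zero, Nat.div_one]
    have := Nat.odd_iff.1 hm
    omega

theorem natCast_div_two_pow_mem_Ioo {m n : ℕ} (hm₀ : 0 < m) (hm : m < 2 ^ n) :
    (m : ℝ) / 2 ^ n ∈ Ioo 0 1 :=
  ⟨by positivity, (div_lt_one (by positivity)).2 (by exact_mod_cast hm)⟩

theorem not_continuousWithinAt_interleaveZeros {m n : ℕ} (hm₀ : 0 < m) (hm : m < 2 ^ n) :
    ¬ ContinuousWithinAt interleaveZeros (Ioo 0 1) ((m : ℝ) / 2 ^ n) := by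
  obtain ⟨e, o, ho, rfl⟩ := Nat.exists_eq_two_pow_mul_odd hm₀.ne'
  have he : e < n := by
    have : 2 ^ e < 2 ^ n := lt_of_le_of_lt (Nat.le_mul_of_pos_right _ ho.pos) hm
    exact (Nat.pow_lt_pow_iff_right (by norm_num)).1 this
  have hx : ((2 ^ e * o : ℕ) : ℝ) / 2 ^ n = (o : ℝ) / 2 ^ (n - e) := by
    have h2n : (2 : ℝ) ^ n = 2 ^ e * 2 ^ (n - e) := by rw [← pow_add, Nat.add_sub_cancel' he.le]
    rw [div_eq_div_iff (by positivity) (by positivity), h2n]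
    push_cast
    ring
  rw [continuousWithinAt_iff_continuousAt (isOpen_Ioo.mem_nhds (natCast_div_two_pow_mem_Ioo hm₀ hm)),
    hx]
  exact not_continuousAt_interleaveZeros_of_odd ho (by omega)

theorem exists_natCast_div_two_pow_mem_Ioo {a b : ℝ} (ha : 0 ≤ a) (hab : a < b) :
    ∃ m n : ℕ, (m : ℝ) / 2 ^ n ∈ Ioo a b := by
  obtain ⟨n, hn⟩ := exists_pow_lt_of_lt_one (sub_pos.2 hab) (by norm_num : (1 / 2 : ℝ) < 1)
  have h2n : (0 : ℝ) < 2 ^ n := by positivity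
  refine ⟨⌊a * 2 ^ n⌋₊ + 1, n, (lt_div_iff₀ h2n).2 ?_, (div_lt_iff₀ h2n).2 ?_⟩
  · exact_mod_cast Nat.lt_floor_add_one _
  · have hfloor := Nat.floor_le (by positivity : 0 ≤ a * 2 ^ n)
    have : (1 / 2 : ℝ) ^ n * 2 ^ n = 1 := by rw [← mul_pow]; norm_num
    push_cast
    nlinarith

theorem Ioo_subset_closure_of_natCast_div_two_pow_mem {s : Set ℝ}
    (hs : ∀ m n : ℕ, 0 < m → m < 2 ^ n → (m : ℝ) / 2 ^ n ∈ s) :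
    Ioo 0 1 ⊆ closure s := by
  intro x hx
  rw [Real.mem_closure_iff]
  intro ε hε
  obtain ⟨m, n, hlo, hhi⟩ :=
    exists_natCast_div_two_pow_mem_Ioo hx.1.le (lt_min (lt_add_of_pos_right x hε) hx.2)
  have hm₀ : 0 < m :=
    Nat.cast_pos.1 ((div_pos_iff_of_pos_right (by positivity)).1 (hx.1.trans hlo))
  have hm : m < 2 ^ n := by
    exact_mod_cast (div_lt_one (by positivity)).1 (hhi.trans_le (min_le_right _ _))
  refine ⟨_, hs m n hm₀ hm, ?_⟩
  rw [abs_sub_lt_iff]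
  constructor <;> linarith [min_le_left (x + ε) 1]

/-- `g` is discontinuous (within `(0,1)`) at every dyadic rational `m / 2^n` with
`0 < m < 2^n`; in particular, the set of discontinuities of `g` is dense in `(0,1)`. -/
theorem interleaveZeros_discontinuous_on_dense_set :
    (∀ m n : ℕ, 0 < m → m < 2 ^ n →
      ¬ ContinuousWithinAt interleaveZeros (Set.Ioo (0 : ℝ) 1) ((m : ℝ) / 2 ^ n)) ∧
    (∀ x ∈ Set.Ioo (0 : ℝ) 1,
      x ∈ closure {y ∈ Set.Ioo (0 : ℝ) 1 |
        ¬ ContinuousWithinAt interleaveZeros (Set.Ioo (0 : ℝ) 1) y}) :=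
  ⟨fun _ _ => not_continuousWithinAt_interleaveZeros,
    Ioo_subset_closure_of_natCast_div_two_pow_mem fun _ _ hm₀ hm =>
      ⟨natCast_div_two_pow_mem_Ioo hm₀ hm, not_continuousWithinAt_interleaveZeros hm₀ hm⟩⟩
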